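/- arXiv:1705.02850 — 3 statements merged into one kernel-verified Lean document; each statement's English description precedes it below -/
import Mathlib

section
/- Let M be a Moore machine with output set O₁ × O₂, and let M₁, M₂ be minimal Moore machines equivalent to the two components of M (i.e. ⟦Mᵢ⟧ = πᵢ ∘ ⟦M⟧ for i = 1, 2). If M is minimal, then the number of states of M is at most the product of the numbers of states of M₁ and M₂: |M| ≤ |M₁| · |M₂|. -/
/-- A Moore machine with input alphabet `I` and output alphabet `O`:
a finite set of states `Q`, a transition function `δ`, an output
function `o` and an initial state `q₀`. -/
structure Moore (I O : Type) where
  Q : Type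
  [fin : Fintype Q]
  δ : Q → I → Q
  o : Q → O
  q₀ : Q

attribute [instance] Moore.fin

namespace Moore

variable {I O O₁ O₂ : Type}

/-- The transition function extended to words: `δ(q, ε) = q`, `δ(q, aw) = δ(δ(q,a), w)`. -/
def run (M : Moore I O) (q : M.Q) : List I → M.Q
  | [] => q
  | a :: w => M.run (M.δ q a) w

/-- The behaviour of a state: `⟦q⟧(w) = o(δ(q, w))`. -/
def stateBeh (M : Moore I O) (q : M.Q) (w : List I) : O := M.o (M.run q w)

/-- The behaviour of a machine: `⟦M⟧ = ⟦q₀⟧`. -/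
def beh (M : Moore I O) (w : List I) : O := M.stateBeh M.q₀ w

/-- The size of a machine: the number of its states. -/
def size (M : Moore I O) : ℕ := Fintype.card M.Q

/-- A state is reachable if it is `δ(q₀, w)` for some word `w`. -/
def Reachable (M : Moore I O) (q : M.Q) : Prop := ∃ w : List I, M.run M.q₀ w = q

/-- A machine is minimal if all states are reachable and distinct states
have different behaviour. -/
def Minimal (M : Moore I O) : Prop :=
  (∀ q, M.Reachable q) ∧ ∀ q q' : M.Q, M.stateBeh q = M.stateBeh q' → q = q'

/-- The product of two Moore machines over the same input alphabet. -/
def prod (M₁ : Moore I O₁) (M₂ : Moore I O₂) : Moore I (O₁ × O₂) where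
  Q := M₁.Q × M₂.Q
  δ := fun q a => (M₁.δ q.1 a, M₂.δ q.2 a)
  o := fun q => (M₁.o q.1, M₂.o q.2)
  q₀ := (M₁.q₀, M₂.q₀)

/-- The first component of a machine with product outputs. -/
def comp₁ (M : Moore I (O₁ × O₂)) : Moore I O₁ :=
  { Q := M.Q, δ := M.δ, o := fun q => (M.o q).1, q₀ := M.q₀ }

/-- The second component of a machine with product outputs. -/
def comp₂ (M : Moore I (O₁ × O₂)) : Moore I O₂ :=
  { Q := M.Q, δ := M.δ, o := fun q => (M.o q).2, q₀ := M.q₀ }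

end Moore


theorem Moore.run_append {I O : Type} (M : Moore I O) (q : M.Q) :
    ∀ w u : List I, M.run q (w ++ u) = M.run (M.run q w) u := by
  intro w
  induction w generalizing q with
  | nil => intro u; rfl
  | cons a w ih => intro u; simpa [Moore.run] using ih (M.δ q a) u

/-- If `M` is minimal and `M₁, M₂` are minimal machines equivalent to the two
components of `M`, then `|M| ≤ |M₁| ⬝ |M₂|`. -/
theorem size_le_mul_of_minimal {I O₁ O₂ : Type} (M : Moore I (O₁ × O₂))
    (M₁ : Moore I O₁) (M₂ : Moore I O₂)
    (h₁ : ∀ w : List I, M₁.beh w = (M.beh w).1)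
    (h₂ : ∀ w : List I, M₂.beh w = (M.beh w).2)
    (hM : M.Minimal) (hM₁ : M₁.Minimal) (hM₂ : M₂.Minimal) :
    M.size ≤ M₁.size * M₂.size := by
  classical
  have key : ∀ w w' : List I, M.run M.q₀ w = M.run M.q₀ w' →
      M₁.run M₁.q₀ w = M₁.run M₁.q₀ w' ∧ M₂.run M₂.q₀ w = M₂.run M₂.q₀ w' := by
    intro w w' h
    constructor
    · apply hM₁.2
      funext u
      have e1 := h₁ (w ++ u); have e2 := h₁ (w' ++ u)
      simp only [Moore.beh, Moore.stateBeh, Moore.run_append, h] at e1 e2 ⊢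
      rw [e1, e2]
    · apply hM₂.2
      funext u
      have e1 := h₂ (w ++ u); have e2 := h₂ (w' ++ u)
      simp only [Moore.beh, Moore.stateBeh, Moore.run_append, h] at e1 e2 ⊢
      rw [e1, e2]
  choose wit hwit using hM.1
  let f : M.Q → M₁.Q × M₂.Q := fun q =>
    (M₁.run M₁.q₀ (wit q), M₂.run M₂.q₀ (wit q))
  have hf : Function.Injective f := by
    intro q q' hq
    have hp1 : M₁.run M₁.q₀ (wit q) = M₁.run M₁.q₀ (wit q') := congrArg Prod.fst hq
    have hp2 : M₂.run M₂.q₀ (wit q) = M₂.run M₂.q₀ (wit q') := congrArg Prod.snd hq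
    apply hM.2
    funext u
    have e1q := h₁ (wit q ++ u); have e1q' := h₁ (wit q' ++ u)
    have e2q := h₂ (wit q ++ u); have e2q' := h₂ (wit q' ++ u)
    simp only [Moore.beh, Moore.stateBeh, Moore.run_append, hwit, hp1.symm, hp2.symm] at e1q e1q' e2q e2q'
    apply Prod.ext <;> simp only [Moore.stateBeh]
    · rw [← e1q, ← e1q']
    · rw [← e2q, ← e2q']
  have := Fintype.card_le_of_injective f hf
  simpa [Moore.size, Fintype.card_prod] using this
end

section
/- For every n ≥ 1, the n-bit register machine Mₙ is minimal: every state of Mₙ is reachable from the initial state, and any two distinct states of Mₙ have different behaviours. Consequently, Mₙ has exactly n · 2ⁿ states, all with pairwise distinct behaviour. -/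
/-- The input alphabet of the `n`-bit register machine: move left, move right, flip. -/
inductive RegInput : Type
  | L : RegInput
  | R : RegInput
  | F : RegInput

/-- The `n`-bit register machine `Mₙ`: states are a bit vector together with a head
position; `L`/`R` move the head (wrapping around), `F` flips the bit under the head;
the output is the bit vector. -/
def regMachine (n : ℕ) (hn : 0 < n) : Moore RegInput (Fin n → Bool) :=
  letI : NeZero n := ⟨hn.ne'⟩
  { Q := (Fin n → Bool) × Fin n
    δ := fun q i =>
      match i with
      | .L => (q.1, q.2 - 1)
      | .R => (q.1, q.2 + 1)
      | .F => (Function.update q.1 q.2 (!(q.1 q.2)), q.2)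
    o := fun q => q.1
    q₀ := (fun _ => false, ⟨0, hn⟩) }

/-- The `l`-th component machine `Mₙˡ` of the `n`-bit register machine: states are a
single bit together with a head position; `L`/`R` move the head (wrapping around),
`F` flips the bit only when the head is at position `l`; the output is the bit. -/
def regComponent (n : ℕ) (hn : 0 < n) (l : Fin n) : Moore RegInput Bool :=
  letI : NeZero n := ⟨hn.ne'⟩
  { Q := Bool × Fin n
    δ := fun q i =>
      match i with
      | .L => (q.1, q.2 - 1)
      | .R => (q.1, q.2 + 1)
      | .F => (if q.2 = l then !q.1 else q.1, q.2)
    o := fun q => q.1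
    q₀ := (false, ⟨0, hn⟩) }

/-! By `R`-moves the head reaches every position and `F` then sets the bit under it, so every
state is built from the initial one bit by bit. Two states with the same behaviour have the same
bits (the empty word), and after one `F` the single changed bit pins down the head position. -/

namespace Moore

variable {I O : Type} (M : Moore I O)

theorem run_append_s15 (q : M.Q) (w w' : List I) :
    M.run q (w ++ w') = M.run (M.run q w) w' := by
  induction w generalizing q with
  | nil => rfl
  | cons a w ih => exact ih (M.δ q a)

variable {M}

theorem Reachable.run {q : M.Q} (h : M.Reachable q) (w : List I) :
    M.Reachable (M.run q w) := by
  obtain ⟨v, rfl⟩ := h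
  exact ⟨v ++ w, M.run_append_s15 _ v w⟩

theorem o_eq_of_stateBeh_eq {q q' : M.Q} (h : M.stateBeh q = M.stateBeh q') :
    M.o q = M.o q' :=
  congrFun h []

theorem stateBeh_δ_eq_of_stateBeh_eq {q q' : M.Q} (h : M.stateBeh q = M.stateBeh q')
    (a : I) : M.stateBeh (M.δ q a) = M.stateBeh (M.δ q' a) :=
  funext fun w => congrFun h (a :: w)

end Moore

section RegMachine

variable {n : ℕ} (hn : 0 < n)

theorem regMachine_reachable_moveHead {b : Fin n → Bool} {k : Fin n}
    (h : (regMachine n hn).Reachable (b, k)) (k' : Fin n) :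
    (regMachine n hn).Reachable (b, k') := by
  have : NeZero n := .of_pos hn
  open Fin.NatCast in
  have moved : ∀ m : ℕ, (regMachine n hn).Reachable (b, k + m) := by
    intro m
    induction m with
    | zero => simpa using h
    | succ m ih =>
      have step := ih.run [.R]
      rwa [Nat.cast_succ, ← add_assoc]
  simpa using moved (k' - k).val

theorem regMachine_reachable_update {b : Fin n → Bool} {k : Fin n}
    (h : (regMachine n hn).Reachable (b, k)) (i : Fin n) (c : Bool) (k' : Fin n) :
    (regMachine n hn).Reachable (Function.update b i c, k') := by
  refine regMachine_reachable_moveHead hn (k := i) ?_ k'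
  obtain rfl | rfl : c = b i ∨ c = !b i := by cases c <;> cases b i <;> simp
  · simpa using regMachine_reachable_moveHead hn h i
  · exact (regMachine_reachable_moveHead hn h i).run [.F]

theorem regMachine_reachable (q : (regMachine n hn).Q) : (regMachine n hn).Reachable q := by
  obtain ⟨b, k⟩ := q
  suffices ∀ s : Finset (Fin n),
      (regMachine n hn).Reachable (fun i => if i ∈ s then b i else false, k) by
    simpa using this Finset.univ
  intro s
  induction s using Finset.induction_on with
  | empty => exact regMachine_reachable_moveHead hn ⟨[], rfl⟩ k
  | insert a s ha ih =>
    have extend : (fun i => if i ∈ insert a s then b i else false) =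
        Function.update (fun i => if i ∈ s then b i else false) a (b a) := by
      ext i
      by_cases hi : i = a <;> simp [hi, ha]
    rw [extend]
    exact regMachine_reachable_update hn ih a (b a) k

theorem regMachine_stateBeh_injective :
    Function.Injective (regMachine n hn).stateBeh := by
  rintro ⟨b, k⟩ ⟨b', k'⟩ h
  obtain rfl : b = b' := Moore.o_eq_of_stateBeh_eq h
  have flipped := Moore.o_eq_of_stateBeh_eq (Moore.stateBeh_δ_eq_of_stateBeh_eq h .F)
  obtain rfl : k = k' := by
    by_contra hk
    have := congrFun flipped k
    simp [regMachine, Function.update_of_ne hk] at this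
  rfl

end RegMachine

/-- The `n`-bit register machine is minimal, and it has exactly `n ⬝ 2ⁿ` states. -/
theorem regMachine_minimal (n : ℕ) (hn : 1 ≤ n) :
    (regMachine n hn).Minimal ∧ (regMachine n hn).size = n * 2 ^ n := by
  refine ⟨⟨regMachine_reachable hn, fun _ _ h => regMachine_stateBeh_injective hn h⟩, ?_⟩
  show Fintype.card ((Fin n → Bool) × Fin n) = n * 2 ^ n
  simp [mul_comm]
end

section
/- For every n ≥ 2, the product Mₙ¹ × ⋯ × Mₙⁿ of the component machines of the n-bit register machine is not minimal: it has a state that is not reachable from its initial state. -/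
/-- The product `Mₙ¹ × ⋯ × Mₙⁿ` of the component machines of the `n`-bit register
machine: states are tuples of component states, with componentwise transitions and
outputs. -/
def regProduct (n : ℕ) (hn : 0 < n) : Moore RegInput (Fin n → Bool) where
  Q := Fin n → (regComponent n hn ⟨0, hn⟩).Q
  δ := fun q i => fun l => (regComponent n hn l).δ (q l) i
  o := fun q => fun l => (regComponent n hn l).o (q l)
  q₀ := fun l => (regComponent n hn l).q₀

namespace Moore

variable {I O : Type} {M : Moore I O}

theorem run_mem_of_forall_δ_mem {S : Set M.Q} (hS : ∀ q ∈ S, ∀ a, M.δ q a ∈ S) :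
    ∀ (w : List I) {q : M.Q}, q ∈ S → M.run q w ∈ S
  | [], _, hq => hq
  | a :: w, _, hq => run_mem_of_forall_δ_mem hS w (hS _ hq a)

theorem Reachable.mem_of_forall_δ_mem {S : Set M.Q} (h₀ : M.q₀ ∈ S)
    (hS : ∀ q ∈ S, ∀ a, M.δ q a ∈ S) {q : M.Q} (hq : M.Reachable q) : q ∈ S := by
  obtain ⟨w, rfl⟩ := hq
  exact run_mem_of_forall_δ_mem hS w h₀

theorem not_minimal_of_not_reachable {q : M.Q} (hq : ¬ M.Reachable q) : ¬ M.Minimal :=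
  fun hM => hq (hM.1 q)

end Moore

def headsAligned (n : ℕ) (hn : 0 < n) : Set (regProduct n hn).Q :=
  {q | ∀ l l', (q l).2 = (q l').2}

theorem regProduct_δ_mem_headsAligned {n : ℕ} {hn : 0 < n} {q : (regProduct n hn).Q}
    (hq : q ∈ headsAligned n hn) (a : RegInput) :
    (regProduct n hn).δ q a ∈ headsAligned n hn := by
  intro l l'
  cases a <;> simp [regProduct, regComponent, hq l l']

theorem regProduct_reachable_mem_headsAligned {n : ℕ} {hn : 0 < n} {q : (regProduct n hn).Q}
    (hq : (regProduct n hn).Reachable q) : q ∈ headsAligned n hn :=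
  hq.mem_of_forall_δ_mem (S := headsAligned n hn) (fun _ _ => rfl)
    fun _ hq' => regProduct_δ_mem_headsAligned hq'

/-- For `n ≥ 2`, the product of the component machines of the `n`-bit register
machine is not minimal: it has an unreachable state. -/
theorem regProduct_not_minimal (n : ℕ) (hn : 2 ≤ n) :
    ¬ (regProduct n (by omega)).Minimal ∧
      ∃ q : (regProduct n (by omega)).Q, ¬ (regProduct n (by omega)).Reachable q := by
  have hn₀ : 0 < n := by omega
  have hunreach : ¬ (regProduct n hn₀).Reachable (fun l => (false, l)) := fun hq =>
    absurd (regProduct_reachable_mem_headsAligned hq ⟨0, hn₀⟩ ⟨1, hn⟩) (by simp)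
  exact ⟨Moore.not_minimal_of_not_reachable hunreach, _, hunreach⟩
end
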